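/- Conversely, if block-lower-triangular matrices Φx, Φu satisfy (I - ZA)Φx - ZB Φu = I, then setting K := Φu Φx^{-1} yields (I - Z(A+BK))^{-1} = Φx and K(I - Z(A+BK))^{-1} = Φu; i.e., the feedback gain K achieves the prescribed closed-loop responses. -/
import Mathlib


open Matrix

/-- Block lower triangular square block matrix. -/
def BlockLowerTri {T n : ℕ} (M : Matrix (Fin (T+1) × Fin n) (Fin (T+1) × Fin n) ℝ) : Prop :=
  ∀ i j, (i.1 : ℕ) < (j.1 : ℕ) → M i j = 0

/-- Strictly block lower triangular square block matrix. -/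
def StrictBlockLowerTri {T n : ℕ} (M : Matrix (Fin (T+1) × Fin n) (Fin (T+1) × Fin n) ℝ) : Prop :=
  ∀ i j, (i.1 : ℕ) ≤ (j.1 : ℕ) → M i j = 0

/-- Strictly block lower triangular rectangular block matrix. -/
def StrictBlockLowerTriRect {T n m : ℕ}
    (M : Matrix (Fin (T+1) × Fin n) (Fin T × Fin m) ℝ) : Prop :=
  ∀ i j, (i.1 : ℕ) ≤ (j.1 : ℕ) → M i j = 0

lemma strictBLT_pow {T n : ℕ} {N : Matrix (Fin (T+1) × Fin n) (Fin (T+1) × Fin n) ℝ}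
    (h : StrictBlockLowerTri N) : N ^ (T+1) = 0 := by
  have key : ∀ k : ℕ, ∀ i j, (i.1 : ℕ) < (j.1 : ℕ) + k → (N ^ k) i j = 0 := by
    intro k
    induction k with
    | zero =>
      intro i j hij
      simp only [pow_zero]
      have : i ≠ j := by
        intro hh; subst hh; omega
      simp [Matrix.one_apply, this]
    | succ k ih =>
      intro i j hij
      rw [pow_succ']
      rw [Matrix.mul_apply]
      apply Finset.sum_eq_zero
      intro l _
      by_cases hl : (i.1 : ℕ) ≤ (l.1 : ℕ)
      · rw [h i l hl, zero_mul]
      · rw [ih l j (by omega), mul_zero]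
  ext i j
  rw [key (T+1) i j (by omega)]
  simp

/-- If block-lower-triangular `Φx`, `Φu` satisfy `(I - ZA) Φx - ZB Φu = I`
(with `ZA`, `ZB` strictly block lower triangular, so that `Φx` is invertible), then
`K := Φu Φx⁻¹` satisfies `(I - Z(A+BK))⁻¹ = Φx` and `K (I - Z(A+BK))⁻¹ = Φu`. -/
theorem feedback_gain_achieves_responses {T n m : ℕ}
    (Z A : Matrix (Fin (T+1) × Fin n) (Fin (T+1) × Fin n) ℝ)
    (B : Matrix (Fin (T+1) × Fin n) (Fin T × Fin m) ℝ)
    (Φx : Matrix (Fin (T+1) × Fin n) (Fin (T+1) × Fin n) ℝ)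
    (Φu : Matrix (Fin T × Fin m) (Fin (T+1) × Fin n) ℝ)
    (hZA : StrictBlockLowerTri (Z * A)) (hZB : StrictBlockLowerTriRect (Z * B))
    (hΦx : BlockLowerTri Φx)
    (hΦu : ∀ (i : Fin T × Fin m) (j : Fin (T+1) × Fin n), (i.1 : ℕ) < (j.1 : ℕ) → Φu i j = 0)
    (haff : (1 - Z * A) * Φx - Z * B * Φu = 1) :
    (1 - Z * (A + B * (Φu * Φx⁻¹)))⁻¹ = Φx ∧
      (Φu * Φx⁻¹) * (1 - Z * (A + B * (Φu * Φx⁻¹)))⁻¹ = Φu := by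
  set N : Matrix (Fin (T+1) × Fin n) (Fin (T+1) × Fin n) ℝ :=
    Z * A * Φx + Z * B * Φu with hN
  have hNstrict : StrictBlockLowerTri N := by
    intro i j hij
    have h1 : (Z * A * Φx) i j = 0 := by
      rw [Matrix.mul_apply]
      apply Finset.sum_eq_zero
      intro l _
      by_cases hl : (i.1 : ℕ) ≤ (l.1 : ℕ)
      · rw [hZA i l hl, zero_mul]
      · rw [hΦx l j (by omega), mul_zero]
    have h2 : (Z * B * Φu) i j = 0 := by
      rw [Matrix.mul_apply]
      apply Finset.sum_eq_zero
      intro l _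
      by_cases hl : (i.1 : ℕ) ≤ (l.1 : ℕ)
      · rw [hZB i l hl, zero_mul]
      · rw [hΦu l j (by omega), mul_zero]
    show (Z * A * Φx + Z * B * Φu) i j = 0
    rw [Matrix.add_apply, h1, h2, add_zero]
  rw [Matrix.sub_mul, Matrix.one_mul, sub_sub] at haff
  have haff' : Φx - N = 1 := by rw [hN]; exact haff
  have hΦxeq : Φx = 1 + N := by rw [← haff']; abel
  have hUnit : IsUnit Φx := by
    rw [hΦxeq]
    exact IsNilpotent.isUnit_one_add ⟨T+1, strictBLT_pow hNstrict⟩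
  have hdet : IsUnit Φx.det := (Matrix.isUnit_iff_isUnit_det Φx).mp hUnit
  have hinv : Φx⁻¹ * Φx = 1 := Matrix.nonsing_inv_mul Φx hdet
  have hKΦx : (Φu * Φx⁻¹) * Φx = Φu := by
    rw [Matrix.mul_assoc, hinv, Matrix.mul_one]
  have hM : (1 - Z * (A + B * (Φu * Φx⁻¹))) * Φx = 1 := by
    rw [Matrix.sub_mul, Matrix.one_mul, Matrix.mul_add, Matrix.add_mul,
      Matrix.mul_assoc Z (B * (Φu * Φx⁻¹)) Φx, Matrix.mul_assoc B (Φu * Φx⁻¹) Φx,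
      hKΦx, ← Matrix.mul_assoc Z B Φu]
    exact haff
  have hMinv : (1 - Z * (A + B * (Φu * Φx⁻¹)))⁻¹ = Φx :=
    Matrix.inv_eq_right_inv hM
  exact ⟨hMinv, by rw [hMinv, hKΦx]⟩
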